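/- For any real numbers K, τ > 0 and any q ≥ 0, the integral ∫_τ^∞ t^q exp(-t/K) dt is at most K^{q+1} · √(Γ(2q+1)) · exp(-τ/(2K)), where Γ denotes the Gamma function. -/

import Mathlib

open Real MeasureTheory Set Filter

set_option maxHeartbeats 2000000 in
theorem integral_rpow_mul_exp_le_of_nonneg (K τ q : ℝ) (hK : 0 < K) (hτ : 0 < τ)
    (hq : 0 ≤ q) :
    ∫ t in Set.Ioi τ, t ^ q * Real.exp (-t / K) ≤
      K ^ (q + 1) * Real.sqrt (Real.Gamma (2 * q + 1)) * Real.exp (-τ / (2 * K)) := by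
  have hK2 : (0:ℝ) < 2 * K := by linarith
  set b : ℝ := (2 * K)⁻¹ with hbdef
  have hb : 0 < b := inv_pos.mpr hK2
  have h2b : 2 * b = K⁻¹ := by rw [hbdef]; field_simp
  set f : ℝ → ℝ := fun t => t ^ q * Real.exp (-(b * t)) with hf_def
  set g : ℝ → ℝ := fun t => Real.exp (-(b * t)) with hg_def
  have hKinv : (0:ℝ) < K⁻¹ := inv_pos.mpr hK
  -- integrability of t ^ (2q) * exp (-K⁻¹ t) on Ioi 0
  have hint2q : IntegrableOn (fun t : ℝ => t ^ (2*q) * Real.exp (-(K⁻¹ * t))) (Ioi 0) := by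
    have := integrableOn_rpow_mul_exp_neg_mul_rpow (s := 2*q) (p := 1)
      (by linarith) zero_lt_one hKinv
    simpa using this
  have hintexp : IntegrableOn (fun t : ℝ => Real.exp (-(K⁻¹ * t))) (Ioi τ) := by
    simpa [neg_mul] using exp_neg_integrableOn_Ioi τ hKinv
  -- pointwise identities
  have hf_sq : ∀ t ∈ Ioi τ, f t ^ 2 = t ^ (2*q) * Real.exp (-(K⁻¹ * t)) := by
    intro t ht
    have ht0 : (0:ℝ) < t := lt_trans hτ ht
    have h1 : (t ^ q) ^ 2 = t ^ (2*q) := by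
      rw [sq, ← Real.rpow_add ht0]; ring_nf
    have h2 : (Real.exp (-(b * t))) ^ 2 = Real.exp (-(K⁻¹ * t)) := by
      rw [sq, ← Real.exp_add]
      congr 1
      rw [← h2b]; ring
    simp only [hf_def, mul_pow, h1, h2]
  have hg_sq : ∀ t ∈ Ioi τ, g t ^ 2 = Real.exp (-(K⁻¹ * t)) := by
    intro t _
    simp only [hg_def]
    rw [sq, ← Real.exp_add]
    congr 1
    rw [← h2b]; ring
  -- integrability of f², g² on Ioi τ
  have hfsq_int : IntegrableOn (fun t => f t ^ 2) (Ioi τ) :=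
    (hint2q.mono_set (Ioi_subset_Ioi hτ.le)).congr_fun
      (fun t ht => (hf_sq t ht).symm) measurableSet_Ioi
  have hgsq_int : IntegrableOn (fun t => g t ^ 2) (Ioi τ) :=
    hintexp.congr_fun (fun t ht => (hg_sq t ht).symm) measurableSet_Ioi
  -- measurability
  have hmf : AEStronglyMeasurable f (volume.restrict (Ioi τ)) := by
    apply Measurable.aestronglyMeasurable
    fun_prop
  have hmg : AEStronglyMeasurable g (volume.restrict (Ioi τ)) := by
    apply Measurable.aestronglyMeasurable
    fun_prop
  -- Memℒp
  have h2e : (ENNReal.ofReal (2:ℝ)) = 2 := by norm_num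
  have hf2 : MemLp f (ENNReal.ofReal (2:ℝ)) (volume.restrict (Ioi τ)) := by
    rw [h2e]; exact (memLp_two_iff_integrable_sq hmf).mpr hfsq_int
  have hg2 : MemLp g (ENNReal.ofReal (2:ℝ)) (volume.restrict (Ioi τ)) := by
    rw [h2e]; exact (memLp_two_iff_integrable_sq hmg).mpr hgsq_int
  have hpq : (2:ℝ).HolderConjugate 2 := (Real.holderConjugate_iff_eq_conjExponent one_lt_two).mpr (by norm_num)
  have hfnn : 0 ≤ᵐ[volume.restrict (Ioi τ)] f := by
    filter_upwards [self_mem_ae_restrict measurableSet_Ioi] with t ht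
    have ht0 : (0:ℝ) < t := lt_trans hτ ht
    simp only [hf_def]
    positivity
  have hgnn : 0 ≤ᵐ[volume.restrict (Ioi τ)] g :=
    Eventually.of_forall fun t => (Real.exp_pos _).le
  have hCS := integral_mul_le_Lp_mul_Lq_of_nonneg hpq hfnn hgnn hf2 hg2
  -- rewrite rpow exponent 2 as nat pow
  have h2cast : ∀ x : ℝ, x ^ (2:ℝ) = x ^ 2 := fun x => by
    rw [show (2:ℝ) = ((2:ℕ):ℝ) by norm_num, Real.rpow_natCast]
  simp only [h2cast] at hCS
  -- the LHS equals ∫ f*g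
  have hLHS : ∫ t in Ioi τ, t ^ q * Real.exp (-t / K) = ∫ t in Ioi τ, f t * g t := by
    refine setIntegral_congr_fun measurableSet_Ioi fun t _ => ?_
    simp only [hf_def, hg_def]
    rw [mul_assoc, ← Real.exp_add]
    congr 2
    rw [neg_div, div_eq_mul_inv, ← h2b]; ring
  -- bound on ∫ f²
  have hA : ∫ t in Ioi τ, f t ^ 2 ≤ K ^ (2*q+1) * Real.Gamma (2*q+1) := by
    calc ∫ t in Ioi τ, f t ^ 2
        = ∫ t in Ioi τ, t ^ (2*q) * Real.exp (-(K⁻¹ * t)) :=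
          setIntegral_congr_fun measurableSet_Ioi hf_sq
      _ ≤ ∫ t in Ioi 0, t ^ (2*q) * Real.exp (-(K⁻¹ * t)) := by
          refine setIntegral_mono_set hint2q ?_
            (HasSubset.Subset.eventuallyLE (Ioi_subset_Ioi hτ.le))
          filter_upwards [self_mem_ae_restrict measurableSet_Ioi] with t ht
          have : (0:ℝ) < t := ht
          positivity
      _ = K ^ (2*q+1) * Real.Gamma (2*q+1) := by
          have := Real.integral_rpow_mul_exp_neg_mul_Ioi (a := 2*q+1) (r := K⁻¹)
            (by linarith) hKinv
          simpa [add_sub_cancel_right, one_div] using this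
  -- value of ∫ g²
  have hB : ∫ t in Ioi τ, g t ^ 2 = K * Real.exp (-(K⁻¹ * τ)) := by
    rw [setIntegral_congr_fun measurableSet_Ioi hg_sq]
    have hderiv : ∀ x ∈ Ioi τ,
        HasDerivAt (fun x : ℝ => -K * Real.exp (-(K⁻¹ * x))) (Real.exp (-(K⁻¹ * x))) x := by
      intro x _
      have h1 : HasDerivAt (fun x : ℝ => -(K⁻¹ * x)) (-K⁻¹) x := by
        have h := ((hasDerivAt_id x).const_mul (K⁻¹)).neg
        rw [mul_one] at h
        exact h
      have h2 := (h1.exp).const_mul (-K)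
      refine h2.congr_deriv ?_
      rw [show -K * (Real.exp (-(K⁻¹ * x)) * -K⁻¹) = (K * K⁻¹) * Real.exp (-(K⁻¹ * x)) by ring,
        mul_inv_cancel₀ hK.ne', one_mul]
    have htends : Tendsto (fun x : ℝ => -K * Real.exp (-(K⁻¹ * x))) atTop (nhds 0) := by
      have h0 : Tendsto (fun x : ℝ => K⁻¹ * x) atTop atTop := by
        simpa using (tendsto_const_mul_atTop_of_pos hKinv).mpr tendsto_id
      have h1 : Tendsto (fun x : ℝ => -(K⁻¹ * x)) atTop atBot :=
        tendsto_neg_atTop_atBot.comp h0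
      have h2 : Tendsto (fun x : ℝ => Real.exp (-(K⁻¹ * x))) atTop (nhds 0) :=
        Real.tendsto_exp_atBot.comp h1
      simpa using h2.const_mul (-K)
    have hcont : ContinuousWithinAt (fun x : ℝ => -K * Real.exp (-(K⁻¹ * x))) (Ici τ) τ :=
      (continuous_const.mul (Real.continuous_exp.comp
        (continuous_const.mul continuous_id).neg)).continuousWithinAt
    rw [integral_Ioi_of_hasDerivAt_of_tendsto hcont hderiv hintexp htends]
    ring
  -- put it together
  have hAnn : (0:ℝ) ≤ ∫ t in Ioi τ, f t ^ 2 :=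
    integral_nonneg fun t => sq_nonneg _
  have hstep : (∫ t in Ioi τ, f t ^ 2) ^ ((1:ℝ)/2) * (∫ t in Ioi τ, g t ^ 2) ^ ((1:ℝ)/2) ≤
      (K ^ (2*q+1) * Real.Gamma (2*q+1)) ^ ((1:ℝ)/2) *
        (K * Real.exp (-(K⁻¹ * τ))) ^ ((1:ℝ)/2) := by
    have hBnn : (0:ℝ) ≤ ∫ t in Ioi τ, g t ^ 2 := integral_nonneg fun t => sq_nonneg _
    have h1 : (∫ t in Ioi τ, f t ^ 2) ^ ((1:ℝ)/2) ≤
        (K ^ (2*q+1) * Real.Gamma (2*q+1)) ^ ((1:ℝ)/2) :=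
      Real.rpow_le_rpow hAnn hA (by norm_num)
    have h2 : (∫ t in Ioi τ, g t ^ 2) ^ ((1:ℝ)/2) ≤
        (K * Real.exp (-(K⁻¹ * τ))) ^ ((1:ℝ)/2) :=
      Real.rpow_le_rpow hBnn hB.le (by norm_num)
    exact mul_le_mul h1 h2 (Real.rpow_nonneg hBnn _)
      (Real.rpow_nonneg (by positivity) _)
  have hfinal : (K ^ (2*q+1) * Real.Gamma (2*q+1)) ^ ((1:ℝ)/2) *
      (K * Real.exp (-(K⁻¹ * τ))) ^ ((1:ℝ)/2)
      = K ^ (q + 1) * Real.sqrt (Real.Gamma (2 * q + 1)) * Real.exp (-τ / (2 * K)) := by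
    have hΓ : (0:ℝ) ≤ Real.Gamma (2*q+1) := Real.Gamma_nonneg_of_nonneg (by linarith)
    have e2 : Real.Gamma (2*q+1) ^ ((1:ℝ)/2) = Real.sqrt (Real.Gamma (2*q+1)) :=
      (Real.sqrt_eq_rpow _).symm
    have e3 : Real.exp (-(K⁻¹ * τ)) ^ ((1:ℝ)/2) = Real.exp (-τ / (2*K)) := by
      rw [← Real.exp_mul]
      congr 1
      rw [div_eq_mul_inv (-τ), mul_inv]
      ring
    have e4 : K ^ ((2*q+1) * ((1:ℝ)/2)) * K ^ ((1:ℝ)/2) = K ^ (q+1) := by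
      rw [← Real.rpow_add hK]
      congr 1
      ring
    rw [Real.mul_rpow (by positivity) hΓ, Real.mul_rpow hK.le (Real.exp_pos _).le,
      e2, e3, ← Real.rpow_mul hK.le, ← e4]
    ring
  calc ∫ t in Ioi τ, t ^ q * Real.exp (-t / K)
      = ∫ t in Ioi τ, f t * g t := hLHS
    _ ≤ (∫ t in Ioi τ, f t ^ 2) ^ ((1:ℝ)/2) * (∫ t in Ioi τ, g t ^ 2) ^ ((1:ℝ)/2) := hCS
    _ ≤ _ := hstep
    _ = _ := hfinal
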